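/- arXiv:2306.04981 — 2 statements merged into one kernel-verified Lean document; each statement's English description precedes it below -/
import Mathlib

section
/- The objective O(p) = I(U;V) − I(U;W), viewed as a function of the conditional distribution p(u|v) (with p(v) and p(w|u,v) fixed and p(w|u,v) allowed to depend on u), equals GD_E(p||p) and is a convex function of p(u|v). Consequently the optimization problem min_{p(u|v): supp(p)⊆E, E[ℓ(V,U,W)]≤L} I(U;V) − I(U;W) is a convex optimization problem. -/
/-!
With `r*(q)` the conditional of `U` given `W` induced by `q`, the objective is
`O(q) = GD_E(q‖r*(q))`, and by Gibbs' inequality `r*(q)` minimizes `GD_E(q‖·)` over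
sub-normalized `r`. Each term of `GD_E` is the perspective `x log (x / y)`, so by the log-sum
inequality `GD_E` is jointly convex in `(q, r)`. For `q = a q₁ + b q₂` this gives
`O(q) ≤ GD_E(q‖a r*(q₁) + b r*(q₂)) ≤ a O(q₁) + b O(q₂)`.
-/

open Real

noncomputable section

variable {V U W : Type*} [Fintype V] [Fintype U] [Fintype W]
  [DecidableEq V] [DecidableEq U]

/-- `q(u|v)` is a conditional distribution supported on the edge set `E`. -/
def CondDistOn (E : Finset (V × U)) (q : V → U → ℝ) : Prop :=
  (∀ v u, 0 ≤ q v u) ∧ (∀ v, ∑ u, q v u = 1) ∧ (∀ v u, q v u ≠ 0 → (v, u) ∈ E)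

/-- Generalized K-L divergence `GD_E(q‖r)`. -/
def GDE (E : Finset (V × U)) (p : V → ℝ) (pw : V → U → W → ℝ)
    (q : V → U → ℝ) (r : W → U → ℝ) : ℝ :=
  ∑ v, ∑ u, ∑ w, if (v, u) ∈ E then p v * q v u * pw v u w * Real.log (q v u / r w u) else 0

/-- Expected loss `Loss(q) = Σ p(v) q(u|v) ℓ̃(v,u)`. -/
def LossE (E : Finset (V × U)) (p : V → ℝ) (lt : V → U → ℝ) (q : V → U → ℝ) : ℝ :=
  ∑ v, ∑ u, if (v, u) ∈ E then p v * q v u * lt v u else 0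

/-- The joint distribution `p(v,u,w) = p(v) q(u|v) p(w|u,v)`. -/
def jointD (E : Finset (V × U)) (p : V → ℝ) (pw : V → U → W → ℝ) (q : V → U → ℝ)
    (v : V) (u : U) (w : W) : ℝ :=
  if (v, u) ∈ E then p v * q v u * pw v u w else 0

/-- Marginal `p(u)`. -/
def margU (p : V → ℝ) (q : V → U → ℝ) (u : U) : ℝ := ∑ v, p v * q v u

/-- Marginal `p(u,w)`. -/
def margUW (E : Finset (V × U)) (p : V → ℝ) (pw : V → U → W → ℝ) (q : V → U → ℝ)
    (u : U) (w : W) : ℝ := ∑ v, jointD E p pw q v u w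

/-- Marginal `p(w)`. -/
def margW (E : Finset (V × U)) (p : V → ℝ) (pw : V → U → W → ℝ) (q : V → U → ℝ)
    (w : W) : ℝ := ∑ u, margUW E p pw q u w

/-- Mutual information `I(U;V)`. -/
def IUV (p : V → ℝ) (q : V → U → ℝ) : ℝ :=
  ∑ v, ∑ u, p v * q v u * Real.log (q v u / margU p q u)

/-- Mutual information `I(U;W)`. -/
def IUW (E : Finset (V × U)) (p : V → ℝ) (pw : V → U → W → ℝ) (q : V → U → ℝ) : ℝ :=
  ∑ u, ∑ w, margUW E p pw q u w *
    Real.log (margUW E p pw q u w / (margU p q u * margW E p pw q w))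

/-- Objective `I(U;V) - I(U;W)`. -/
def Obj (E : Finset (V × U)) (p : V → ℝ) (pw : V → U → W → ℝ) (q : V → U → ℝ) : ℝ :=
  IUV p q - IUW E p pw q

/-- The induced conditional distribution `r*(q)(u|w)`. -/
def rstar (E : Finset (V × U)) (p : V → ℝ) (pw : V → U → W → ℝ) (q : V → U → ℝ)
    (w : W) (u : U) : ℝ := margUW E p pw q u w / margW E p pw q w

/-- Gibbs update `q_s^*(r)(u|v)`. -/
def qstar (E : Finset (V × U)) (pw : V → U → W → ℝ) (lt : V → U → ℝ)
    (s : ℝ) (r : W → U → ℝ) (v : V) (u : U) : ℝ :=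
  (if (v, u) ∈ E then Real.exp (-s * lt v u) * ∏ w', r w' u ^ pw v u w' else 0) /
  (∑ u', if (v, u') ∈ E then Real.exp (-s * lt v u') * ∏ w', r w' u' ^ pw v u' w' else 0)

/-- The penalty (Lagrangian) function `F_s(q,r)`. -/
def FPen (E : Finset (V × U)) (p : V → ℝ) (pw : V → U → W → ℝ) (lt : V → U → ℝ)
    (s : ℝ) (q : V → U → ℝ) (r : W → U → ℝ) : ℝ :=
  GDE E p pw q r + s * LossE E p lt q

/-- Generalized K-L divergence between two conditional distributions on `E`. -/
def GDcond (E : Finset (V × U)) (p : V → ℝ) (q1 q2 : V → U → ℝ) : ℝ :=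
  ∑ v, ∑ u, if (v, u) ∈ E then p v * q1 v u * Real.log (q1 v u / q2 v u) else 0

/-- Conditional K-L divergence `GD_q(r1‖r2)` weighted by `q(w)`. -/
def GDr (E : Finset (V × U)) (p : V → ℝ) (pw : V → U → W → ℝ) (q : V → U → ℝ)
    (r1 r2 : W → U → ℝ) : ℝ :=
  ∑ u, ∑ w, margW E p pw q w * r1 w u * Real.log (r1 w u / r2 w u)

/-- The target-loss function `T(L)` (valued in `EReal`, `+∞` if infeasible). -/
def TL (E : Finset (V × U)) (p : V → ℝ) (pw : V → U → W → ℝ) (lt : V → U → ℝ)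
    (L : ℝ) : EReal :=
  sInf {x : EReal | ∃ q, CondDistOn E q ∧ LossE E p lt q ≤ L ∧ x = (Obj E p pw q : EReal)}

open Finset

theorem sub_le_mul_log_div {x y : ℝ} (hx : 0 ≤ x) (hy : 0 ≤ y) (hxy : y = 0 → x = 0) :
    x - y ≤ x * log (x / y) := by
  rcases hx.eq_or_lt with rfl | hx
  · simpa using hy
  have hy : 0 < y := hy.lt_of_ne' fun h => hx.ne' (hxy h)
  have key := one_sub_inv_le_log_of_pos (div_pos hx hy)
  rw [inv_div] at key
  calc x - y = x * (1 - y / x) := by field_simp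
    _ ≤ x * log (x / y) := mul_le_mul_of_nonneg_left key hx.le

theorem log_sum_le {ι : Type*} (s : Finset ι) {x y : ι → ℝ} (hx : ∀ i ∈ s, 0 ≤ x i)
    (hy : ∀ i ∈ s, 0 ≤ y i) (hxy : ∀ i ∈ s, y i = 0 → x i = 0) :
    (∑ i ∈ s, x i) * log ((∑ i ∈ s, x i) / ∑ i ∈ s, y i) ≤ ∑ i ∈ s, x i * log (x i / y i) := by
  set X := ∑ i ∈ s, x i
  set Y := ∑ i ∈ s, y i
  rcases (sum_nonneg hx).eq_or_lt with hX | hX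
  · have hx0 := (sum_eq_zero_iff_of_nonneg hx).1 hX.symm
    rw [show X = 0 from hX.symm, zero_mul, sum_eq_zero fun i hi => by rw [hx0 i hi, zero_mul]]
  have hY : 0 < Y := by
    refine (sum_nonneg hy).lt_of_ne fun hY => hX.ne' (sum_eq_zero fun i hi => ?_)
    exact hxy i hi ((sum_eq_zero_iff_of_nonneg hy).1 hY.symm i hi)
  set c := X / Y
  have hc : 0 < c := div_pos hX hY
  -- `c * y` has the same total mass `X` as `x`.
  have term : ∀ i ∈ s, x i - c * y i + x i * log c ≤ x i * log (x i / y i) := by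
    intro i hi
    rcases (hx i hi).eq_or_lt with hxi | hxi
    · rw [← hxi]
      nlinarith [hy i hi]
    have hyi : y i ≠ 0 := fun h => hxi.ne' (hxy i hi h)
    have key := sub_le_mul_log_div (hx i hi) (mul_nonneg hc.le (hy i hi))
      fun h => absurd h (mul_ne_zero hc.ne' hyi)
    have hsplit : log (x i / y i) = log (x i / (c * y i)) + log c := by
      rw [← log_mul (div_ne_zero hxi.ne' (mul_ne_zero hc.ne' hyi)) hc.ne']
      congr 1
      field_simp
    rw [hsplit]
    linarith
  calc X * log c = ∑ i ∈ s, (x i - c * y i + x i * log c) := by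
        rw [sum_add_distrib, sum_sub_distrib, ← mul_sum, ← sum_mul, div_mul_cancel₀ _ hY.ne']
        ring
    _ ≤ _ := sum_le_sum term

theorem mul_log_div_jointly_convex {a b x₁ x₂ y₁ y₂ : ℝ} (ha : 0 ≤ a) (hb : 0 ≤ b)
    (hx₁ : 0 ≤ x₁) (hx₂ : 0 ≤ x₂) (hy₁ : 0 ≤ y₁) (hy₂ : 0 ≤ y₂)
    (h₁ : y₁ = 0 → x₁ = 0) (h₂ : y₂ = 0 → x₂ = 0) :
    (a * x₁ + b * x₂) * log ((a * x₁ + b * x₂) / (a * y₁ + b * y₂)) ≤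
      a * (x₁ * log (x₁ / y₁)) + b * (x₂ * log (x₂ / y₂)) := by
  have scale : ∀ {t x y : ℝ}, t * x * log (t * x / (t * y)) = t * (x * log (x / y)) := by
    intro t x y
    rcases eq_or_ne t 0 with rfl | ht
    · simp
    · rw [mul_div_mul_left _ _ ht, mul_assoc]
  have key := log_sum_le univ (x := ![a * x₁, b * x₂]) (y := ![a * y₁, b * y₂])
    (by simpa [Fin.forall_fin_two] using ⟨mul_nonneg ha hx₁, mul_nonneg hb hx₂⟩)
    (by simpa [Fin.forall_fin_two] using ⟨mul_nonneg ha hy₁, mul_nonneg hb hy₂⟩)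
    (by simpa [Fin.forall_fin_two] using ⟨fun h => h.imp_right h₁, fun h => h.imp_right h₂⟩)
  simpa [Fin.sum_univ_two, scale] using key

section Marginals

variable {E : Finset (V × U)} {p : V → ℝ} {pw : V → U → W → ℝ} {q : V → U → ℝ}

omit [Fintype V] [Fintype U] [Fintype W] in
theorem jointD_nonneg (hp : ∀ v, 0 ≤ p v) (hq : ∀ v u, 0 ≤ q v u)
    (hpw : ∀ v u w, 0 ≤ pw v u w) (v : V) (u : U) (w : W) : 0 ≤ jointD E p pw q v u w := by
  unfold jointD
  split_ifs
  · exact mul_nonneg (mul_nonneg (hp v) (hq v u)) (hpw v u w)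
  · exact le_rfl

omit [Fintype V] [Fintype U] in
theorem sum_jointD (hpw1 : ∀ v u, (v, u) ∈ E → ∑ w, pw v u w = 1)
    (hqE : ∀ v u, q v u ≠ 0 → (v, u) ∈ E) (v : V) (u : U) :
    ∑ w, jointD E p pw q v u w = p v * q v u := by
  by_cases h : (v, u) ∈ E
  · simp only [jointD, if_pos h, ← mul_sum, hpw1 v u h, mul_one]
  · have hq : q v u = 0 := by_contra fun hq => h (hqE v u hq)
    simp [jointD, h, hq]

omit [Fintype U] [Fintype W] in
theorem margUW_nonneg (hj : ∀ v u w, 0 ≤ jointD E p pw q v u w) (u : U) (w : W) :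
    0 ≤ margUW E p pw q u w :=
  sum_nonneg fun v _ => hj v u w

omit [Fintype U] [Fintype W] in
theorem jointD_le_margUW (hj : ∀ v u w, 0 ≤ jointD E p pw q v u w) (v : V) (u : U) (w : W) :
    jointD E p pw q v u w ≤ margUW E p pw q u w :=
  single_le_sum (fun v _ => hj v u w) (mem_univ v)

omit [Fintype U] [Fintype W] in
theorem margUW_pos_of_jointD_ne_zero (hj : ∀ v u w, 0 ≤ jointD E p pw q v u w) {v : V} {u : U}
    {w : W} (h : jointD E p pw q v u w ≠ 0) : 0 < margUW E p pw q u w :=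
  ((hj v u w).lt_of_ne' h).trans_le (jointD_le_margUW hj v u w)

omit [Fintype W] in
theorem margUW_le_margW (hj : ∀ v u w, 0 ≤ jointD E p pw q v u w) (u : U) (w : W) :
    margUW E p pw q u w ≤ margW E p pw q w :=
  single_le_sum (fun u _ => margUW_nonneg hj u w) (mem_univ u)

omit [Fintype W] in
theorem margW_nonneg (hj : ∀ v u w, 0 ≤ jointD E p pw q v u w) (w : W) :
    0 ≤ margW E p pw q w :=
  sum_nonneg fun u _ => margUW_nonneg hj u w

omit [Fintype U] in
theorem sum_margUW (hpw1 : ∀ v u, (v, u) ∈ E → ∑ w, pw v u w = 1)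
    (hqE : ∀ v u, q v u ≠ 0 → (v, u) ∈ E) (u : U) :
    ∑ w, margUW E p pw q u w = margU p q u := by
  unfold margUW
  rw [sum_comm]
  exact sum_congr rfl fun v _ => sum_jointD hpw1 hqE v u

omit [Fintype U] in
theorem margUW_le_margU (hj : ∀ v u w, 0 ≤ jointD E p pw q v u w)
    (hpw1 : ∀ v u, (v, u) ∈ E → ∑ w, pw v u w = 1)
    (hqE : ∀ v u, q v u ≠ 0 → (v, u) ∈ E) (u : U) (w : W) :
    margUW E p pw q u w ≤ margU p q u := by
  rw [← sum_margUW hpw1 hqE u]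
  exact single_le_sum (fun w _ => margUW_nonneg hj u w) (mem_univ w)

omit [Fintype W] in
theorem rstar_nonneg (hj : ∀ v u w, 0 ≤ jointD E p pw q v u w) (w : W) (u : U) :
    0 ≤ rstar E p pw q w u :=
  div_nonneg (margUW_nonneg hj u w) (margW_nonneg hj w)

omit [Fintype W] in
theorem rstar_eq_zero_iff (hj : ∀ v u w, 0 ≤ jointD E p pw q v u w) {w : W} {u : U} :
    rstar E p pw q w u = 0 ↔ margUW E p pw q u w = 0 := by
  refine ⟨fun h => ?_, fun h => by rw [rstar, h, zero_div]⟩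
  rcases div_eq_zero_iff.1 h with h | h
  · exact h
  · exact le_antisymm (h ▸ margUW_le_margW hj u w) (margUW_nonneg hj u w)

omit [Fintype W] in
theorem sum_rstar_le_one (w : W) : ∑ u, rstar E p pw q w u ≤ 1 := by
  simp only [rstar, ← sum_div]
  exact div_self_le_one _

omit [Fintype U] [Fintype W] in
theorem margUW_smul_add_smul (q₁ q₂ : V → U → ℝ) (a b : ℝ) (u : U) (w : W) :
    margUW E p pw (a • q₁ + b • q₂) u w =
      a * margUW E p pw q₁ u w + b * margUW E p pw q₂ u w := by
  simp only [margUW, jointD, mul_sum, ← sum_add_distrib]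
  refine sum_congr rfl fun v _ => ?_
  split_ifs
  · simp only [Pi.add_apply, Pi.smul_apply, smul_eq_mul]
    ring
  · simp

end Marginals

section Divergence

variable {E : Finset (V × U)} {p : V → ℝ} {pw : V → U → W → ℝ} {q : V → U → ℝ}

theorem GDE_eq_sum_jointD_mul_log (r : W → U → ℝ) :
    GDE E p pw q r = ∑ v, ∑ u, ∑ w, jointD E p pw q v u w * log (q v u / r w u) := by
  simp only [GDE, jointD, ite_mul, zero_mul]

theorem GDE_eq_IUV_add (hj : ∀ v u w, 0 ≤ jointD E p pw q v u w)
    (hpw1 : ∀ v u, (v, u) ∈ E → ∑ w, pw v u w = 1)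
    (hqE : ∀ v u, q v u ≠ 0 → (v, u) ∈ E) {r : W → U → ℝ}
    (hr : ∀ u w, margUW E p pw q u w ≠ 0 → r w u ≠ 0) :
    GDE E p pw q r =
      IUV p q + ∑ u, ∑ w, margUW E p pw q u w * log (margU p q u / r w u) := by
  have hsplit : ∀ v u w, jointD E p pw q v u w * log (q v u / r w u) =
      jointD E p pw q v u w * log (q v u / margU p q u) +
        jointD E p pw q v u w * log (margU p q u / r w u) := by
    intro v u w
    rcases eq_or_ne (jointD E p pw q v u w) 0 with h | h
    · simp [h]
    have hm := margUW_pos_of_jointD_ne_zero hj h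
    have hq : q v u ≠ 0 := fun hq => h (by simp [jointD, hq])
    have hmu : margU p q u ≠ 0 := (hm.trans_le (margUW_le_margU hj hpw1 hqE u w)).ne'
    rw [← mul_add, ← log_mul (div_ne_zero hq hmu) (div_ne_zero hmu (hr u w hm.ne')),
      div_mul_div_cancel₀ hmu]
  have hIUV : ∑ v, ∑ u, ∑ w, jointD E p pw q v u w * log (q v u / margU p q u) = IUV p q := by
    simp only [← sum_mul, sum_jointD hpw1 hqE, IUV]
  have hcross : ∑ v, ∑ u, ∑ w, jointD E p pw q v u w * log (margU p q u / r w u) =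
      ∑ u, ∑ w, margUW E p pw q u w * log (margU p q u / r w u) := by
    rw [sum_comm]
    refine sum_congr rfl fun u _ => ?_
    rw [sum_comm]
    simp only [margUW, sum_mul]
  rw [GDE_eq_sum_jointD_mul_log]
  simp only [hsplit, sum_add_distrib, hIUV, hcross]

theorem sum_margUW_mul_log_margU_div_rstar :
    ∑ u, ∑ w, margUW E p pw q u w * log (margU p q u / rstar E p pw q w u) = -IUW E p pw q := by
  simp only [IUW, rstar, ← sum_neg_distrib, ← mul_neg, ← log_inv, inv_div, div_div_eq_mul_div]

theorem Obj_eq_GDE_rstar (hj : ∀ v u w, 0 ≤ jointD E p pw q v u w)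
    (hpw1 : ∀ v u, (v, u) ∈ E → ∑ w, pw v u w = 1)
    (hqE : ∀ v u, q v u ≠ 0 → (v, u) ∈ E) :
    Obj E p pw q = GDE E p pw q (rstar E p pw q) := by
  rw [GDE_eq_IUV_add hj hpw1 hqE fun u w => (rstar_eq_zero_iff hj).not.2,
    sum_margUW_mul_log_margU_div_rstar, Obj, sub_eq_add_neg]

theorem margUW_mul_log_margU_div_rstar_add_le (hj : ∀ v u w, 0 ≤ jointD E p pw q v u w)
    (hpw1 : ∀ v u, (v, u) ∈ E → ∑ w, pw v u w = 1)
    (hqE : ∀ v u, q v u ≠ 0 → (v, u) ∈ E) {r : W → U → ℝ} (hr0 : ∀ w u, 0 ≤ r w u)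
    (hr : ∀ u w, margUW E p pw q u w ≠ 0 → r w u ≠ 0) (u : U) (w : W) :
    margUW E p pw q u w * log (margU p q u / rstar E p pw q w u) +
        (margUW E p pw q u w - margW E p pw q w * r w u) ≤
      margUW E p pw q u w * log (margU p q u / r w u) := by
  rcases (margUW_nonneg hj u w).eq_or_lt with hm | hm
  · rw [← hm]
    nlinarith [margW_nonneg hj w, hr0 w u]
  have hmw : 0 < margW E p pw q w := hm.trans_le (margUW_le_margW hj u w)
  have hmu : margU p q u ≠ 0 := (hm.trans_le (margUW_le_margU hj hpw1 hqE u w)).ne'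
  have hru : r w u ≠ 0 := hr u w hm.ne'
  -- `x - y ≤ x log (x / y)` at `x = p(u,w)`, `y = p(w) r(u|w)`, where `x / y = r*(u|w) / r(u|w)`.
  have key := sub_le_mul_log_div hm.le (mul_nonneg hmw.le (hr0 w u))
    fun h => absurd h (mul_ne_zero hmw.ne' hru)
  have hsplit : log (margU p q u / r w u) = log (margU p q u / rstar E p pw q w u) +
      log (margUW E p pw q u w / (margW E p pw q w * r w u)) := by
    rw [← log_mul (div_ne_zero hmu ((rstar_eq_zero_iff hj).not.2 hm.ne'))
      (div_ne_zero hm.ne' (mul_ne_zero hmw.ne' hru))]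
    congr 1
    rw [rstar]
    field_simp
  rw [hsplit]
  linarith

theorem GDE_rstar_le (hj : ∀ v u w, 0 ≤ jointD E p pw q v u w)
    (hpw1 : ∀ v u, (v, u) ∈ E → ∑ w, pw v u w = 1)
    (hqE : ∀ v u, q v u ≠ 0 → (v, u) ∈ E) {r : W → U → ℝ} (hr0 : ∀ w u, 0 ≤ r w u)
    (hr1 : ∀ w, ∑ u, r w u ≤ 1) (hr : ∀ u w, margUW E p pw q u w ≠ 0 → r w u ≠ 0) :
    GDE E p pw q (rstar E p pw q) ≤ GDE E p pw q r := by
  rw [GDE_eq_IUV_add hj hpw1 hqE hr,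
    GDE_eq_IUV_add hj hpw1 hqE fun u w => (rstar_eq_zero_iff hj).not.2]
  have slack : 0 ≤ ∑ u, ∑ w, (margUW E p pw q u w - margW E p pw q w * r w u) := by
    rw [sum_comm]
    refine sum_nonneg fun w _ => ?_
    rw [sum_sub_distrib, ← mul_sum]
    change 0 ≤ margW E p pw q w - margW E p pw q w * ∑ u, r w u
    nlinarith [margW_nonneg hj w, hr1 w]
  gcongr IUV p q + ?_
  calc ∑ u, ∑ w, margUW E p pw q u w * log (margU p q u / rstar E p pw q w u)
      ≤ ∑ u, ∑ w, (margUW E p pw q u w * log (margU p q u / rstar E p pw q w u) +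
          (margUW E p pw q u w - margW E p pw q w * r w u)) := by
        simp only [sum_add_distrib]
        linarith
    _ ≤ _ := sum_le_sum fun u _ => sum_le_sum fun w _ =>
        margUW_mul_log_margU_div_rstar_add_le hj hpw1 hqE hr0 hr u w

end Divergence

omit [Fintype V] in
theorem convex_setOf_condDistOn {E : Finset (V × U)} :
    Convex ℝ {q : V → U → ℝ | CondDistOn E q} := by
  intro q₁ hq₁ q₂ hq₂ a b ha hb hab
  refine ⟨fun v u => ?_, fun v => ?_, fun v u hne => ?_⟩
  · simp only [Pi.add_apply, Pi.smul_apply, smul_eq_mul]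
    exact add_nonneg (mul_nonneg ha (hq₁.1 v u)) (mul_nonneg hb (hq₂.1 v u))
  · simp only [Pi.add_apply, Pi.smul_apply, smul_eq_mul]
    rw [sum_add_distrib, ← mul_sum, ← mul_sum, hq₁.2.1 v, hq₂.2.1 v, mul_one, mul_one, hab]
  · simp only [Pi.add_apply, Pi.smul_apply, smul_eq_mul] at hne
    by_contra hE
    have h₁ : q₁ v u = 0 := by_contra fun h => hE (hq₁.2.2 v u h)
    have h₂ : q₂ v u = 0 := by_contra fun h => hE (hq₂.2.2 v u h)
    simp [h₁, h₂] at hne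

theorem isLinearMap_LossE (E : Finset (V × U)) (p : V → ℝ) (lt : V → U → ℝ) :
    IsLinearMap ℝ (LossE E p lt) where
  map_add q₁ q₂ := by
    simp only [LossE, ← sum_add_distrib]
    refine sum_congr rfl fun v _ => sum_congr rfl fun u _ => ?_
    split_ifs
    · simp only [Pi.add_apply]
      ring
    · simp
  map_smul c q := by
    simp only [LossE, smul_eq_mul, mul_sum]
    refine sum_congr rfl fun v _ => sum_congr rfl fun u _ => ?_
    split_ifs
    · simp only [Pi.smul_apply, smul_eq_mul]
      ring
    · simp

section Convexity

variable {E : Finset (V × U)} {p : V → ℝ} {pw : V → U → W → ℝ}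

theorem GDE_smul_add_smul_le {q₁ q₂ : V → U → ℝ} {r₁ r₂ : W → U → ℝ}
    (hp : ∀ v, 0 ≤ p v) (hpw : ∀ v u w, 0 ≤ pw v u w)
    (hq₁ : ∀ v u, 0 ≤ q₁ v u) (hq₂ : ∀ v u, 0 ≤ q₂ v u)
    (hr₁ : ∀ w u, 0 ≤ r₁ w u) (hr₂ : ∀ w u, 0 ≤ r₂ w u)
    (hs₁ : ∀ u w, margUW E p pw q₁ u w ≠ 0 → r₁ w u ≠ 0)
    (hs₂ : ∀ u w, margUW E p pw q₂ u w ≠ 0 → r₂ w u ≠ 0) {a b : ℝ} (ha : 0 ≤ a) (hb : 0 ≤ b) :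
    GDE E p pw (a • q₁ + b • q₂) (a • r₁ + b • r₂) ≤
      a * GDE E p pw q₁ r₁ + b * GDE E p pw q₂ r₂ := by
  have support : ∀ {q : V → U → ℝ} {r : W → U → ℝ}, (∀ v u, 0 ≤ q v u) →
      (∀ u w, margUW E p pw q u w ≠ 0 → r w u ≠ 0) → ∀ {v u w}, (v, u) ∈ E →
        p v * pw v u w ≠ 0 → r w u = 0 → q v u = 0 := by
    intro q r hq hs v u w hE hc hr
    by_contra hqvu
    have hj : jointD E p pw q v u w ≠ 0 := by
      rw [jointD, if_pos hE, mul_right_comm]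
      exact mul_ne_zero hc hqvu
    exact hs u w (margUW_pos_of_jointD_ne_zero (jointD_nonneg hp hq hpw) hj).ne' hr
  simp only [GDE, mul_sum, ← sum_add_distrib]
  gcongr with v _ u _ w _
  split_ifs with hE
  · rcases eq_or_ne (p v * pw v u w) 0 with hc | hc
    · rcases mul_eq_zero.1 hc with h | h <;> simp [h]
    have key := mul_log_div_jointly_convex ha hb (hq₁ v u) (hq₂ v u) (hr₁ w u) (hr₂ w u)
      (support hq₁ hs₁ hE hc) (support hq₂ hs₂ hE hc)
    simp only [Pi.add_apply, Pi.smul_apply, smul_eq_mul]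
    calc _ = p v * pw v u w * ((a * q₁ v u + b * q₂ v u) *
          log ((a * q₁ v u + b * q₂ v u) / (a * r₁ w u + b * r₂ w u))) := by ring
      _ ≤ p v * pw v u w * (a * (q₁ v u * log (q₁ v u / r₁ w u)) +
          b * (q₂ v u * log (q₂ v u / r₂ w u))) :=
        mul_le_mul_of_nonneg_left key (mul_nonneg (hp v) (hpw v u w))
      _ = _ := by ring
  · simp

theorem GDE_rstar_le_GDE_smul_add_smul_rstar {q₁ q₂ : V → U → ℝ}
    (hp : ∀ v, 0 ≤ p v) (hpw : ∀ v u w, 0 ≤ pw v u w)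
    (hpw1 : ∀ v u, (v, u) ∈ E → ∑ w, pw v u w = 1)
    (hq₁ : CondDistOn E q₁) (hq₂ : CondDistOn E q₂) {a b : ℝ} (ha : 0 ≤ a) (hb : 0 ≤ b)
    (hab : a + b = 1) :
    GDE E p pw (a • q₁ + b • q₂) (rstar E p pw (a • q₁ + b • q₂)) ≤
      GDE E p pw (a • q₁ + b • q₂) (a • rstar E p pw q₁ + b • rstar E p pw q₂) := by
  have hq := convex_setOf_condDistOn hq₁ hq₂ ha hb hab
  have hj₁ := jointD_nonneg (E := E) hp hq₁.1 hpw
  have hj₂ := jointD_nonneg (E := E) hp hq₂.1 hpw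
  refine GDE_rstar_le (jointD_nonneg hp hq.1 hpw) hpw1 hq.2.2 (fun w u => ?_) (fun w => ?_)
    (fun u w hm => ?_) <;> simp only [Pi.add_apply, Pi.smul_apply, smul_eq_mul]
  · exact add_nonneg (mul_nonneg ha (rstar_nonneg hj₁ w u)) (mul_nonneg hb (rstar_nonneg hj₂ w u))
  · rw [sum_add_distrib, ← mul_sum, ← mul_sum]
    nlinarith [sum_rstar_le_one (E := E) (p := p) (pw := pw) (q := q₁) w,
      sum_rstar_le_one (E := E) (p := p) (pw := pw) (q := q₂) w]
  · intro h0
    obtain ⟨h₁, h₂⟩ := (add_eq_zero_iff_of_nonneg (mul_nonneg ha (rstar_nonneg hj₁ w u))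
      (mul_nonneg hb (rstar_nonneg hj₂ w u))).1 h0
    rw [mul_eq_zero, rstar_eq_zero_iff hj₁] at h₁
    rw [mul_eq_zero, rstar_eq_zero_iff hj₂] at h₂
    apply hm
    rw [margUW_smul_add_smul]
    rcases h₁ with h₁ | h₁ <;> rcases h₂ with h₂ | h₂ <;> simp [h₁, h₂]

end Convexity

theorem objective_convex_general
    (E : Finset (V × U))
    (p : V → ℝ) (hp : ∀ v, 0 < p v)
    (pw : V → U → W → ℝ) (hpw0 : ∀ v u w, 0 ≤ pw v u w)
    (hpw1 : ∀ v u, (v, u) ∈ E → ∑ w, pw v u w = 1)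
    (lt : V → U → ℝ) (L : ℝ) :
    (∀ q : V → U → ℝ, CondDistOn E q →
        Obj E p pw q = GDE E p pw q (rstar E p pw q))
      ∧ ConvexOn ℝ {q : V → U → ℝ | CondDistOn E q} (fun q => Obj E p pw q)
      ∧ Convex ℝ {q : V → U → ℝ | CondDistOn E q ∧ LossE E p lt q ≤ L} := by
  have hp0 : ∀ v, 0 ≤ p v := fun v => (hp v).le
  have hj : ∀ q, CondDistOn E q → ∀ v u w, 0 ≤ jointD E p pw q v u w :=
    fun q hq => jointD_nonneg hp0 hq.1 hpw0
  have hObj : ∀ q, CondDistOn E q → Obj E p pw q = GDE E p pw q (rstar E p pw q) :=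
    fun q hq => Obj_eq_GDE_rstar (hj q hq) hpw1 hq.2.2
  have hr : ∀ q, CondDistOn E q → ∀ u w, margUW E p pw q u w ≠ 0 → rstar E p pw q w u ≠ 0 :=
    fun q hq u w => (rstar_eq_zero_iff (hj q hq)).not.2
  refine ⟨hObj, ⟨convex_setOf_condDistOn, fun q₁ hq₁ q₂ hq₂ a b ha hb hab => ?_⟩,
    convex_setOf_condDistOn.inter (convex_halfSpace_le (isLinearMap_LossE E p lt) L)⟩
  calc Obj E p pw (a • q₁ + b • q₂)
      = GDE E p pw (a • q₁ + b • q₂) (rstar E p pw (a • q₁ + b • q₂)) :=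
        hObj _ (convex_setOf_condDistOn hq₁ hq₂ ha hb hab)
    _ ≤ GDE E p pw (a • q₁ + b • q₂) (a • rstar E p pw q₁ + b • rstar E p pw q₂) :=
        GDE_rstar_le_GDE_smul_add_smul_rstar hp0 hpw0 hpw1 hq₁ hq₂ ha hb hab
    _ ≤ a * GDE E p pw q₁ (rstar E p pw q₁) + b * GDE E p pw q₂ (rstar E p pw q₂) :=
        GDE_smul_add_smul_le hp0 hpw0 hq₁.1 hq₂.1 (rstar_nonneg (hj q₁ hq₁))
          (rstar_nonneg (hj q₂ hq₂)) (hr q₁ hq₁) (hr q₂ hq₂) ha hb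
    _ = a • Obj E p pw q₁ + b • Obj E p pw q₂ := by
        rw [hObj q₁ hq₁, hObj q₂ hq₂]
        rfl

/-- the objective `O(p) = I(U;V) − I(U;W)` equals `GD_E(p‖p)`
(second argument the induced conditional of `U` given `W`), is convex in `p(u|v)`,
and the feasible set is convex, so the problem is a convex optimization problem. -/
theorem objective_convex
    (E : Finset (V × U)) (hE : ∀ v : V, ∃ u, (v, u) ∈ E)
    (p : V → ℝ) (hp : ∀ v, 0 < p v) (hp1 : ∑ v, p v = 1)
    (pw : V → U → W → ℝ) (hpw0 : ∀ v u w, 0 ≤ pw v u w)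
    (hpw1 : ∀ v u, (v, u) ∈ E → ∑ w, pw v u w = 1)
    (lt : V → U → ℝ) (hlt : ∀ v u, 0 ≤ lt v u) (L : ℝ) :
    (∀ q : V → U → ℝ, CondDistOn E q →
        Obj E p pw q = GDE E p pw q (rstar E p pw q))
      ∧ ConvexOn ℝ {q : V → U → ℝ | CondDistOn E q} (fun q => Obj E p pw q)
      ∧ Convex ℝ {q : V → U → ℝ | CondDistOn E q ∧ LossE E p lt q ≤ L} :=
  objective_convex_general E p hp pw hpw0 hpw1 lt L
end
end

section
/- (Cardinality bound.) For the problem min_{p(u|v)} I(U;V) − I(U;W) subject to E[ℓ(V,U,W)] ≤ L with E = V × U, there exists an optimal conditional distribution p(u|v) whose marginal p(u) is supported on at most |V| + |W| elements of U. -/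
open Real

noncomputable section

variable {V U W : Type*} [Fintype V] [Fintype U] [Fintype W]
  [DecidableEq V] [DecidableEq U]

/-! A minimizer exists because the feasible set is compact and, on it, the objective equals the
continuous function `∑ u, objDensity u - H(W)`. Rescaling each column `q(·|u)` by a weight
`g u ≥ 0` multiplies `objDensity u` by `g u`. The rescaled kernel is again a conditional
distribution with the same `p(w)` and the same expected loss when `g` solves the linear system
`∑ u, g u • F u = ∑ u, F u` for `F u = (p(·,u), p(u,·), loss at u)`; these vectors lie in the
hyperplane `∑ p(·,u) = ∑ p(u,·)`, of dimension `|V| + |W|`. So if `p(u)` has more than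
`|V| + |W|` atoms the system has a line of solutions through `g = 1`, along which the objective
is linear: moving in the non-increasing direction until a weight vanishes (Carathéodory)
shrinks the support without leaving the feasible set or increasing the objective. -/

open Finset Module

theorem exists_nontrivial_relation_of_finrank_lt {K E ι : Type*} [Field K] [AddCommGroup E]
    [Module K E] {P : Submodule K E} [FiniteDimensional K P] {S : Finset ι} {F : ι → E}
    (hFP : ∀ i ∈ S, F i ∈ P) (hS : finrank K P < #S) :
    ∃ z : ι → K, ∑ i ∈ S, z i • F i = 0 ∧ ∃ i ∈ S, z i ≠ 0 := by
  classical
  by_contra! h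
  have hspan : Submodule.span K (Set.range fun i : (S : Set ι) => F i) ≤ P :=
    Submodule.span_le.mpr (by rintro _ ⟨i, rfl⟩; exact hFP i i.2)
  have := (finrank_span_eq_card (linearIndepOn_finset_iff.mpr h)).symm.trans_le
    (Submodule.finrank_mono hspan)
  exact hS.not_ge (by simpa using this)

section Reweighting

variable {ι E : Type*} [AddCommGroup E] [Module ℝ E] {S : Finset ι} {F : ι → E}

theorem exists_neg_of_sum_smul_eq_zero {φ : E →ₗ[ℝ] ℝ} (hφ : ∀ i ∈ S, 0 < φ (F i))
    {z : ι → ℝ} (hz : ∑ i ∈ S, z i • F i = 0) (hne : ∃ i ∈ S, z i ≠ 0) :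
    ∃ i ∈ S, z i < 0 := by
  by_contra! hz0
  have hsum : ∑ i ∈ S, z i * φ (F i) = 0 := by simpa using congrArg φ hz
  obtain ⟨i, hi, hzi⟩ := hne
  have := (sum_eq_zero_iff_of_nonneg fun j hj => mul_nonneg (hz0 j hj) (hφ j hj).le).mp hsum i hi
  exact hzi ((mul_eq_zero.mp this).resolve_right (hφ i hi).ne')

theorem exists_reweighting {P : Submodule ℝ E} [FiniteDimensional ℝ P] (hFP : ∀ i ∈ S, F i ∈ P)
    (hS : finrank ℝ P < #S) {φ : E →ₗ[ℝ] ℝ} (hφ : ∀ i ∈ S, 0 < φ (F i)) (h : ι → ℝ) :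
    ∃ g : ι → ℝ, (∀ i ∈ S, 0 ≤ g i) ∧ (∃ i ∈ S, g i = 0) ∧
      ∑ i ∈ S, g i • F i = ∑ i ∈ S, F i ∧ ∑ i ∈ S, g i * h i ≤ ∑ i ∈ S, h i := by
  obtain ⟨z, hzF, hzh, hne⟩ : ∃ z : ι → ℝ, ∑ i ∈ S, z i • F i = 0 ∧
      ∑ i ∈ S, z i * h i ≤ 0 ∧ ∃ i ∈ S, z i ≠ 0 := by
    obtain ⟨z, hzF, i, hi, hzi⟩ := exists_nontrivial_relation_of_finrank_lt hFP hS
    rcases le_total (∑ i ∈ S, z i * h i) 0 with hle | hge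
    · exact ⟨z, hzF, hle, i, hi, hzi⟩
    · exact ⟨-z, by simp [hzF], by simpa using hge, i, hi, neg_ne_zero.mpr hzi⟩
  obtain ⟨j, hj, hzj⟩ := exists_neg_of_sum_smul_eq_zero hφ hzF hne
  obtain ⟨i₀, hi₀, hmin⟩ := S.exists_min_image z ⟨j, hj⟩
  have hzi₀ : z i₀ < 0 := (hmin j hj).trans_lt hzj
  -- move along `z` until the most negative coordinate vanishes
  refine ⟨fun i => 1 - z i / z i₀, fun i hi => ?_, ⟨i₀, hi₀, by simp [hzi₀.ne]⟩, ?_, ?_⟩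
  · exact sub_nonneg.mpr ((div_le_one_of_neg hzi₀).mpr (hmin i hi))
  · simp only [sub_smul, one_smul, sum_sub_distrib, div_eq_inv_mul, mul_smul, ← smul_sum, hzF,
      smul_zero, sub_zero]
  · have : 0 ≤ (z i₀)⁻¹ * ∑ i ∈ S, z i * h i :=
      mul_nonneg_of_nonpos_of_nonpos (inv_nonpos.mpr hzi₀.le) hzh
    simp only [sub_mul, one_mul, sum_sub_distrib, div_eq_inv_mul, mul_assoc, ← mul_sum]
    linarith

end Reweighting

theorem mul_log_div_of_imp {x y : ℝ} (h : x ≠ 0 → y ≠ 0) :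
    x * log (x / y) = -negMulLog x - x * log y := by
  rcases eq_or_ne x 0 with rfl | hx
  · simp
  · rw [log_div hx (h hx), negMulLog]; ring

theorem mul_log_mul_of_imp {x y z : ℝ} (h : x ≠ 0 → y ≠ 0 ∧ z ≠ 0) :
    x * log (y * z) = x * log y + x * log z := by
  rcases eq_or_ne x 0 with rfl | hx
  · simp
  · rw [log_mul (h hx).1 (h hx).2, mul_add]

section InformationBottleneck

variable (p : V → ℝ) (pw : V → U → W → ℝ)

def margUSupport (q : V → U → ℝ) : Finset U := univ.filter fun u => 0 < margU p q u

def objDensity (q : V → U → ℝ) (u : U) : ℝ :=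
  ∑ w, negMulLog (margUW univ p pw q u w) - ∑ v, p v * negMulLog (q v u)

def reweight (g : U → ℝ) (q : V → U → ℝ) : V → U → ℝ := fun v u => g u * q v u

def sumFstSubSumSnd : ((V → ℝ) × (W → ℝ) × ℝ) →ₗ[ℝ] ℝ where
  toFun x := ∑ v, x.1 v - ∑ w, x.2.1 w
  map_add' x y := by simp only [Prod.fst_add, Prod.snd_add, Pi.add_apply, sum_add_distrib]; ring
  map_smul' c x := by simp [mul_sum, mul_sub]

def sumFst : ((V → ℝ) × (W → ℝ) × ℝ) →ₗ[ℝ] ℝ where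
  toFun x := ∑ v, x.1 v
  map_add' x y := by simp [sum_add_distrib]
  map_smul' c x := by simp [mul_sum]

omit [DecidableEq V] [DecidableEq U] in
theorem finrank_ker_sumFstSubSumSnd_le [Nonempty V] :
    finrank ℝ (LinearMap.ker (sumFstSubSumSnd (V := V) (W := W))) ≤
      Fintype.card V + Fintype.card W := by
  have hne : LinearMap.ker (sumFstSubSumSnd (V := V) (W := W)) ≠ ⊤ := by
    rw [Ne, LinearMap.ker_eq_top]
    intro h
    have := LinearMap.congr_fun h (fun _ => 1, 0, 0)
    simp [sumFstSubSumSnd] at this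
  have := Submodule.finrank_lt hne
  simp only [finrank_prod, finrank_fintype_fun_eq_card, finrank_self] at this
  omega

omit [Fintype U] [DecidableEq V] [DecidableEq U] in
theorem margU_pos_of_ne_zero (hp : ∀ v, 0 < p v) {q : V → U → ℝ} (hq : ∀ v u, 0 ≤ q v u)
    {v : V} {u : U} (h : q v u ≠ 0) : 0 < margU p q u :=
  (mul_pos (hp v) ((hq v u).lt_of_ne' h)).trans_le <|
    single_le_sum (f := fun v => p v * q v u) (fun v _ => mul_nonneg (hp v).le (hq v u))
      (mem_univ v)

omit [Fintype W] in
theorem margUW_univ (q : V → U → ℝ) (u : U) (w : W) :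
    margUW univ p pw q u w = ∑ v, p v * q v u * pw v u w := by
  simp [margUW, jointD]

theorem sum_margUW_univ (hpw1 : ∀ v u, ∑ w, pw v u w = 1) (q : V → U → ℝ) (u : U) :
    ∑ w, margUW univ p pw q u w = margU p q u := by
  simp only [margUW_univ, margU]
  rw [sum_comm]
  simp [← mul_sum, hpw1]

theorem LossE_univ (lt : V → U → ℝ) (q : V → U → ℝ) :
    LossE univ p lt q = ∑ v, ∑ u, p v * q v u * lt v u := by
  simp [LossE]

omit [DecidableEq V] [DecidableEq U] in
theorem IUV_eq (hp : ∀ v, 0 < p v) {q : V → U → ℝ} (hq : ∀ v u, 0 ≤ q v u) :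
    IUV p q = ∑ u, negMulLog (margU p q u) - ∑ v, ∑ u, p v * negMulLog (q v u) := by
  have hterm : ∀ v u, p v * q v u * log (q v u / margU p q u) =
      -(p v * negMulLog (q v u)) - p v * q v u * log (margU p q u) := fun v u => by
    rw [mul_assoc, mul_log_div_of_imp fun h => (margU_pos_of_ne_zero p hp hq h).ne']; ring
  have hmarg : ∀ u, ∑ v, p v * q v u * log (margU p q u) = -negMulLog (margU p q u) :=
    fun u => by rw [← sum_mul, negMulLog]; simp [margU]
  simp only [IUV, hterm, sum_sub_distrib, sum_neg_distrib]
  rw [sum_comm (f := fun v u => p v * q v u * log (margU p q u))]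
  simp only [hmarg, sum_neg_distrib]
  ring

theorem IUW_eq (hp : ∀ v, 0 < p v) (hpw0 : ∀ v u w, 0 ≤ pw v u w)
    (hpw1 : ∀ v u, ∑ w, pw v u w = 1) {q : V → U → ℝ} (hq : ∀ v u, 0 ≤ q v u) :
    IUW univ p pw q = ∑ u, negMulLog (margU p q u) + ∑ w, negMulLog (margW univ p pw q w)
      - ∑ u, ∑ w, negMulLog (margUW univ p pw q u w) := by
  unfold IUW
  set B := margUW univ p pw q
  have hB0 : ∀ u w, 0 ≤ B u w := fun u w => by
    simp only [B, margUW_univ]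
    exact sum_nonneg fun v _ => mul_nonneg (mul_nonneg (hp v).le (hq v u)) (hpw0 v u w)
  have hpos : ∀ u w, B u w ≠ 0 → margU p q u ≠ 0 ∧ margW univ p pw q w ≠ 0 := by
    intro u w hB
    refine ⟨?_, ((hB0 u w).lt_of_ne' hB |>.trans_le <|
      single_le_sum (fun u _ => hB0 u w) (mem_univ u)).ne'⟩
    obtain ⟨v, hv⟩ : ∃ v, q v u ≠ 0 := by
      by_contra! h
      simp [B, margUW_univ, h] at hB
    exact (margU_pos_of_ne_zero p hp hq hv).ne'
  have hterm : ∀ u w, B u w * log (B u w / (margU p q u * margW univ p pw q w)) =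
      -negMulLog (B u w) - B u w * log (margU p q u) - B u w * log (margW univ p pw q w) :=
    fun u w => by
      rw [mul_log_div_of_imp fun h => mul_ne_zero (hpos u w h).1 (hpos u w h).2,
        mul_log_mul_of_imp (hpos u w)]
      ring
  have hU : ∀ u, ∑ w, B u w * log (margU p q u) = -negMulLog (margU p q u) := fun u => by
    rw [← sum_mul, sum_margUW_univ p pw hpw1, negMulLog]; ring
  have hW : ∀ w, ∑ u, B u w * log (margW univ p pw q w) =
      -negMulLog (margW univ p pw q w) := fun w => by
    rw [← sum_mul, negMulLog]; simp [margW, B]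
  simp only [hterm, sum_sub_distrib, sum_neg_distrib, hU]
  rw [sum_comm (f := fun u w => B u w * log (margW univ p pw q w))]
  simp only [hW, sum_neg_distrib]
  ring

theorem Obj_univ_eq (hp : ∀ v, 0 < p v) (hpw0 : ∀ v u w, 0 ≤ pw v u w)
    (hpw1 : ∀ v u, ∑ w, pw v u w = 1) {q : V → U → ℝ} (hq : ∀ v u, 0 ≤ q v u) :
    Obj univ p pw q = ∑ u, objDensity p pw q u - ∑ w, negMulLog (margW univ p pw q w) := by
  rw [Obj, IUV_eq p hp hq, IUW_eq p pw hp hpw0 hpw1 hq]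
  simp only [objDensity, sum_sub_distrib]
  rw [sum_comm (f := fun v u => p v * negMulLog (q v u))]
  ring

theorem continuous_sum_objDensity_sub :
    Continuous fun q : V → U → ℝ =>
      ∑ u, objDensity p pw q u - ∑ w, negMulLog (margW univ p pw q w) := by
  simp only [objDensity, margW, margUW_univ]
  fun_prop

theorem exists_forall_Obj_le (hp : ∀ v, 0 < p v) (hpw0 : ∀ v u w, 0 ≤ pw v u w)
    (hpw1 : ∀ v u, ∑ w, pw v u w = 1) (lt : V → U → ℝ) (L : ℝ)
    (hfeas : ∃ q, CondDistOn univ q ∧ LossE univ p lt q ≤ L) :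
    ∃ q, CondDistOn univ q ∧ LossE univ p lt q ≤ L ∧
      ∀ q', CondDistOn univ q' → LossE univ p lt q' ≤ L → Obj univ p pw q ≤ Obj univ p pw q' := by
  set K := {q | CondDistOn univ q ∧ LossE univ p lt q ≤ L}
  have hK : K = (Set.univ.pi fun _ => stdSimplex ℝ U) ∩ {q | LossE univ p lt q ≤ L} := by
    ext q
    simp [K, CondDistOn, stdSimplex, forall_and]
  have hcompact : IsCompact K :=
    hK ▸ (isCompact_univ_pi fun _ => isCompact_stdSimplex ℝ U).inter_right
      (isClosed_le ((continuous_congr (LossE_univ p lt)).mpr (by fun_prop)) continuous_const)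
  have hcont : ContinuousOn (Obj univ p pw) K :=
    (continuous_sum_objDensity_sub p pw).continuousOn.congr fun q hq =>
      Obj_univ_eq p pw hp hpw0 hpw1 hq.1.1
  obtain ⟨q, hqK, hmin⟩ := hcompact.exists_isMinOn hfeas hcont
  exact ⟨q, hqK.1, hqK.2, fun q' h1 h2 => hmin ⟨h1, h2⟩⟩

omit [Fintype U] [DecidableEq V] [DecidableEq U] in
theorem margU_reweight (g : U → ℝ) (q : V → U → ℝ) (u : U) :
    margU p (reweight g q) u = g u * margU p q u := by
  simp only [margU, reweight, mul_sum]
  exact sum_congr rfl fun v _ => by ring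

omit [Fintype W] in
theorem margUW_reweight (g : U → ℝ) (q : V → U → ℝ) (u : U) (w : W) :
    margUW univ p pw (reweight g q) u w = g u * margUW univ p pw q u w := by
  simp only [margUW_univ, reweight, mul_sum]
  exact sum_congr rfl fun v _ => by ring

omit [Fintype W] in
theorem margW_reweight (g : U → ℝ) (q : V → U → ℝ) (w : W) :
    margW univ p pw (reweight g q) w = ∑ u, g u * margUW univ p pw q u w := by
  simp only [margW, margUW_reweight]

theorem LossE_reweight (lt : V → U → ℝ) (g : U → ℝ) (q : V → U → ℝ) :
    LossE univ p lt (reweight g q) = ∑ u, g u * ∑ v, p v * q v u * lt v u := by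
  rw [LossE_univ, sum_comm]
  simp only [reweight, mul_sum]
  exact sum_congr rfl fun u _ => sum_congr rfl fun v _ => by ring

theorem objDensity_reweight (hpw1 : ∀ v u, ∑ w, pw v u w = 1) (g : U → ℝ) (q : V → U → ℝ)
    (u : U) : objDensity p pw (reweight g q) u = g u * objDensity p pw q u := by
  have hV : ∑ v, p v * negMulLog (g u * q v u) =
      margU p q u * negMulLog (g u) + g u * ∑ v, p v * negMulLog (q v u) := by
    simp only [negMulLog_mul, margU, sum_mul, mul_sum, ← sum_add_distrib]
    exact sum_congr rfl fun v _ => by ring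
  have hW : ∑ w, negMulLog (g u * margUW univ p pw q u w) =
      margU p q u * negMulLog (g u) + g u * ∑ w, negMulLog (margUW univ p pw q u w) := by
    simp only [negMulLog_mul, sum_add_distrib, ← sum_mul, ← mul_sum, sum_margUW_univ p pw hpw1]
  simp only [objDensity, margUW_reweight, reweight, hV, hW]
  ring

omit [DecidableEq V] [DecidableEq U] in
theorem mem_margUSupport_of_ne_zero (hp : ∀ v, 0 < p v) {q : V → U → ℝ}
    (hq : ∀ v u, 0 ≤ q v u) {v : V} {u : U} (h : q v u ≠ 0) : u ∈ margUSupport p q :=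
  mem_filter.mpr ⟨mem_univ u, margU_pos_of_ne_zero p hp hq h⟩

omit [DecidableEq V] [DecidableEq U] in
theorem sum_margUSupport (hp : ∀ v, 0 < p v) {q : V → U → ℝ} (hq : ∀ v u, 0 ≤ q v u)
    {M : Type*} [AddCommMonoid M] {f : U → M} (hf : ∀ u, (∀ v, q v u = 0) → f u = 0) :
    ∑ u ∈ margUSupport p q, f u = ∑ u, f u :=
  sum_filter_of_ne fun u _ hfu => by
    obtain ⟨v, hv⟩ : ∃ v, q v u ≠ 0 := by
      by_contra! h
      exact hfu (hf u h)
    exact margU_pos_of_ne_zero p hp hq hv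

theorem exists_reweighting_preserving (hp : ∀ v, 0 < p v) (hpw1 : ∀ v u, ∑ w, pw v u w = 1)
    (lt : V → U → ℝ) {q : V → U → ℝ} (hq : ∀ v u, 0 ≤ q v u)
    (hcard : Fintype.card V + Fintype.card W < #(margUSupport p q)) :
    ∃ g : U → ℝ, (∀ u ∈ margUSupport p q, 0 ≤ g u) ∧ (∃ u ∈ margUSupport p q, g u = 0) ∧
      (∀ v, ∑ u, g u * q v u = ∑ u, q v u) ∧
      (∀ w, ∑ u, g u * margUW univ p pw q u w = margW univ p pw q w) ∧
      ∑ u, g u * ∑ v, p v * q v u * lt v u = LossE univ p lt q ∧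
      ∑ u, g u * objDensity p pw q u ≤ ∑ u, objDensity p pw q u := by
  set S := margUSupport p q
  obtain ⟨u₁, hu₁⟩ : S.Nonempty := card_pos.mp (by omega)
  have : Nonempty V := univ_nonempty_iff.mp (nonempty_of_sum_ne_zero (mem_filter.mp hu₁).2.ne')
  let F : U → (V → ℝ) × (W → ℝ) × ℝ := fun u =>
    (fun v => p v * q v u, fun w => margUW univ p pw q u w, ∑ v, p v * q v u * lt v u)
  have hFker : ∀ u ∈ S, F u ∈ LinearMap.ker sumFstSubSumSnd := fun u _ => by
    simp [F, sumFstSubSumSnd, sum_margUW_univ p pw hpw1, margU]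
  have hFpos : ∀ u ∈ S, 0 < sumFst (F u) := fun u hu => (mem_filter.mp hu).2
  obtain ⟨g, hg0, hgu₀, hgF, hgh⟩ := exists_reweighting hFker
    (finrank_ker_sumFstSubSumSnd_le.trans_lt hcard) hFpos (objDensity p pw q)
  have hzero : ∀ u, (∀ v, q v u = 0) → F u = 0 := fun u h => by
    simp [F, margUW_univ, h, Pi.zero_def]
  rw [sum_margUSupport p hp hq fun u h => by simp [hzero u h],
    sum_margUSupport p hp hq hzero] at hgF
  rw [sum_margUSupport p hp hq fun u h => by simp [objDensity, margUW_univ, h],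
    sum_margUSupport p hp hq fun u h => by simp [objDensity, margUW_univ, h]] at hgh
  refine ⟨g, hg0, hgu₀, fun v => ?_, fun w => ?_, ?_, hgh⟩
  · have h := congrFun (congrArg Prod.fst hgF) v
    simp only [F, Prod.fst_sum, Prod.smul_fst, Finset.sum_apply, Pi.smul_apply, smul_eq_mul] at h
    refine mul_left_cancel₀ (hp v).ne' ?_
    rw [mul_sum, mul_sum, ← h]
    exact sum_congr rfl fun u _ => by ring
  · simpa [F, margW, Prod.snd_sum, Prod.fst_sum] using
      congrFun (congrArg (fun x => x.2.1) hgF) w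
  · simpa [F, LossE_univ, Prod.snd_sum, sum_comm (γ := V)] using congrArg (fun x => x.2.2) hgF

theorem exists_Obj_le_card_margUSupport_lt (hp : ∀ v, 0 < p v) (hpw0 : ∀ v u w, 0 ≤ pw v u w)
    (hpw1 : ∀ v u, ∑ w, pw v u w = 1) {lt : V → U → ℝ} {L : ℝ} {q : V → U → ℝ}
    (hq : CondDistOn univ q) (hL : LossE univ p lt q ≤ L)
    (hcard : Fintype.card V + Fintype.card W < #(margUSupport p q)) :
    ∃ q', CondDistOn univ q' ∧ LossE univ p lt q' ≤ L ∧ Obj univ p pw q' ≤ Obj univ p pw q ∧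
      #(margUSupport p q') < #(margUSupport p q) := by
  obtain ⟨hq0, hq1, -⟩ := hq
  obtain ⟨g, hg0, ⟨u₀, hu₀, hgu₀⟩, hrow, hmargW, hloss, hobj⟩ :=
    exists_reweighting_preserving p pw hp hpw1 lt hq0 hcard
  have hq'0 : ∀ v u, 0 ≤ reweight g q v u := fun v u => by
    rcases eq_or_ne (q v u) 0 with h | h
    · simp [reweight, h]
    · exact mul_nonneg (hg0 u (mem_margUSupport_of_ne_zero p hp hq0 h)) (hq0 v u)
  refine ⟨reweight g q, ⟨hq'0, fun v => (hrow v).trans (hq1 v), fun _ _ _ => mem_univ _⟩,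
    ?_, ?_, ?_⟩
  · rwa [LossE_reweight, hloss]
  · rw [Obj_univ_eq p pw hp hpw0 hpw1 hq'0, Obj_univ_eq p pw hp hpw0 hpw1 hq0]
    simp only [objDensity_reweight p pw hpw1, margW_reweight, hmargW]
    linarith
  · refine (card_le_card fun u hu => ?_).trans_lt (card_erase_lt_of_mem hu₀)
    have h := (mem_filter.mp hu).2
    rw [margU_reweight] at h
    refine mem_erase.mpr ⟨fun h' => by simp [h', hgu₀] at h, mem_filter.mpr ⟨mem_univ u, ?_⟩⟩
    exact (sum_nonneg fun v _ => mul_nonneg (hp v).le (hq0 v u)).lt_of_ne'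
      (right_ne_zero_of_mul h.ne')

theorem exists_Obj_le_card_margUSupport_le (hp : ∀ v, 0 < p v) (hpw0 : ∀ v u w, 0 ≤ pw v u w)
    (hpw1 : ∀ v u, ∑ w, pw v u w = 1) {lt : V → U → ℝ} {L : ℝ} {q : V → U → ℝ}
    (hq : CondDistOn univ q) (hL : LossE univ p lt q ≤ L) :
    ∃ q', CondDistOn univ q' ∧ LossE univ p lt q' ≤ L ∧ Obj univ p pw q' ≤ Obj univ p pw q ∧
      #(margUSupport p q') ≤ Fintype.card V + Fintype.card W := by
  induction hn : #(margUSupport p q) using Nat.strong_induction_on generalizing q with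
  | _ n ih =>
    by_cases hcard : n ≤ Fintype.card V + Fintype.card W
    · exact ⟨q, hq, hL, le_rfl, hn ▸ hcard⟩
    obtain ⟨q₁, hq₁, hL₁, hObj₁, hlt⟩ :=
      exists_Obj_le_card_margUSupport_lt p pw hp hpw0 hpw1 hq hL (hn ▸ not_le.mp hcard)
    obtain ⟨q', hq', hL', hObj', hcard'⟩ := ih _ (hn ▸ hlt) hq₁ hL₁ rfl
    exact ⟨q', hq', hL', hObj'.trans hObj₁, hcard'⟩

end InformationBottleneck

theorem cardinality_bound_general
    (p : V → ℝ) (hp : ∀ v, 0 < p v)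
    (pw : V → U → W → ℝ) (hpw0 : ∀ v u w, 0 ≤ pw v u w)
    (hpw1 : ∀ v u, ∑ w, pw v u w = 1)
    (lt : V → U → ℝ) (L : ℝ)
    (hfeas : ∃ q, CondDistOn (Finset.univ : Finset (V × U)) q
      ∧ LossE (Finset.univ : Finset (V × U)) p lt q ≤ L) :
    ∃ q, CondDistOn (Finset.univ : Finset (V × U)) q
      ∧ LossE (Finset.univ : Finset (V × U)) p lt q ≤ L
      ∧ (∀ q', CondDistOn (Finset.univ : Finset (V × U)) q' →
          LossE (Finset.univ : Finset (V × U)) p lt q' ≤ L →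
          Obj (Finset.univ : Finset (V × U)) p pw q
            ≤ Obj (Finset.univ : Finset (V × U)) p pw q')
      ∧ (Finset.univ.filter (fun u => 0 < margU p q u)).card
          ≤ Fintype.card V + Fintype.card W := by
  obtain ⟨q₀, hq₀, hL₀, hmin⟩ := exists_forall_Obj_le p pw hp hpw0 hpw1 lt L hfeas
  obtain ⟨q, hq, hL, hObj, hcard⟩ := exists_Obj_le_card_margUSupport_le p pw hp hpw0 hpw1 hq₀ hL₀
  exact ⟨q, hq, hL, fun q' hq' hL' => hObj.trans (hmin q' hq' hL'), hcard⟩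

/-- cardinality bound — there exists an optimal conditional distribution
whose `U`-marginal is supported on at most `|V| + |W|` elements. -/
theorem cardinality_bound
    (p : V → ℝ) (hp : ∀ v, 0 < p v) (hp1 : ∑ v, p v = 1)
    (pw : V → U → W → ℝ) (hpw0 : ∀ v u w, 0 ≤ pw v u w)
    (hpw1 : ∀ v u, ∑ w, pw v u w = 1)
    (lt : V → U → ℝ) (hlt : ∀ v u, 0 ≤ lt v u) (L : ℝ)
    (hfeas : ∃ q, CondDistOn (Finset.univ : Finset (V × U)) q
      ∧ LossE (Finset.univ : Finset (V × U)) p lt q ≤ L) :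
    ∃ q, CondDistOn (Finset.univ : Finset (V × U)) q
      ∧ LossE (Finset.univ : Finset (V × U)) p lt q ≤ L
      ∧ (∀ q', CondDistOn (Finset.univ : Finset (V × U)) q' →
          LossE (Finset.univ : Finset (V × U)) p lt q' ≤ L →
          Obj (Finset.univ : Finset (V × U)) p pw q
            ≤ Obj (Finset.univ : Finset (V × U)) p pw q')
      ∧ (Finset.univ.filter (fun u => 0 < margU p q u)).card
          ≤ Fintype.card V + Fintype.card W :=
  cardinality_bound_general p hp pw hpw0 hpw1 lt L hfeas
end
end
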